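/- arXiv:1711.07778 — 2 statements merged into one kernel-verified Lean document; each statement's English description precedes it below -/
import Mathlib

section
/- Let Θ : ℝ^d → ℂ be a function with Θ(0) = 0. Then Θ is negative definite (in the sense of Schoenberg) if and only if for every t > 0 the function x ↦ t^{−1}(1 − exp(−tΘ(x))) is negative definite. -/
/-!
If `Θ` is negative definite and `t > 0`, then by the Schur product theorem the entrywise
exponential of the positive semidefinite matrix `t (Θ xᵢ + conj Θ xⱼ - Θ (xᵢ - xⱼ))` is positive
semidefinite; conjugating by the diagonal matrix `diag (exp (-t Θ xᵢ))` shows that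
`exp (-t Θ)` is positive definite. For any positive definite `φ`, `φ 0 - φ` is negative
definite: its matrix at `x₁, …, x_m` is the matrix of `φ` at `0, x₁, …, x_m` compressed along
the vectors `eᵢ - e₀`. Conversely, `Θ` is the pointwise limit of `t⁻¹ (1 - exp (-t Θ))` as
`t → 0⁺`, and negative definiteness is preserved under pointwise limits because positive
semidefinite matrices form a closed set.
-/

open scoped ComplexOrder
open Filter Topology Matrix

def IsNegDefFn {d : ℕ} (Θ : EuclideanSpace ℝ (Fin d) → ℂ) : Prop :=
  ∀ (m : ℕ) (x : Fin m → EuclideanSpace ℝ (Fin d)),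
    (Matrix.of fun i j =>
      Θ (x i) + (starRingEnd ℂ) (Θ (x j)) - Θ (x i - x j)).PosSemidef

namespace Matrix

variable {n : Type*} [Fintype n]

theorem isClosed_setOf_posSemidef : IsClosed {M : Matrix n n ℂ | M.PosSemidef} := by
  simp only [posSemidef_iff_dotProduct_mulVec, Set.ofPred_and, Set.ofPred_forall]
  refine (isClosed_eq (by fun_prop) continuous_id).inter (isClosed_iInter fun x => ?_)
  exact isClosed_le continuous_const (by fun_prop)

theorem posSemidef_allOnes : (of fun _ _ : n => (1 : ℂ)).PosSemidef := by
  simpa [vecMulVec] using posSemidef_vecMulVec_self_star (fun _ : n => (1 : ℂ))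

theorem PosSemidef.map_pow {A : Matrix n n ℂ} (hA : A.PosSemidef) (k : ℕ) :
    (A.map (· ^ k)).PosSemidef := by
  induction k with
  | zero =>
    rw [show A.map (· ^ 0) = of fun _ _ => 1 by ext; simp]
    exact posSemidef_allOnes
  | succ k ih =>
    rw [show A.map (· ^ (k + 1)) = A.map (· ^ k) ⊙ A by ext; simp [pow_succ]]
    exact ih.hadamard hA

theorem PosSemidef.map_exp {A : Matrix n n ℂ} (hA : A.PosSemidef) :
    (A.map Complex.exp).PosSemidef := by
  have hsum : HasSum (fun k : ℕ => (k.factorial : ℝ)⁻¹ • A.map (· ^ k)) (A.map Complex.exp) := by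
    refine Pi.hasSum.2 fun i => Pi.hasSum.2 fun j => ?_
    simpa [Complex.exp_eq_exp_ℂ, div_eq_inv_mul] using
      NormedSpace.expSeries_div_hasSum_exp (A i j)
  refine isClosed_setOf_posSemidef.mem_of_tendsto hsum.tendsto_sum_nat (.of_forall fun N => ?_)
  exact Finset.sum_induction _ _ (fun _ _ => PosSemidef.add) .zero
    fun k _ => (hA.map_pow k).smul (by positivity)

end Matrix

def IsPosDefFn {E : Type*} [Sub E] (φ : E → ℂ) : Prop :=
  ∀ (m : ℕ) (x : Fin m → E), (Matrix.of fun i j => φ (x i - x j)).PosSemidef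

namespace IsNegDefFn

variable {d : ℕ} {Θ : EuclideanSpace ℝ (Fin d) → ℂ}

theorem const_mul (hΘ : IsNegDefFn Θ) {c : ℝ} (hc : 0 ≤ c) :
    IsNegDefFn fun x => (c : ℂ) * Θ x := by
  intro m x
  convert (hΘ m x).smul hc using 1
  ext i j
  simp only [map_mul, Complex.conj_ofReal, of_apply, Matrix.smul_apply, Complex.real_smul]
  ring

theorem isPosDefFn_exp_neg (hΘ : IsNegDefFn Θ) : IsPosDefFn fun x => Complex.exp (-Θ x) := by
  intro m x
  let D : Matrix (Fin m) (Fin m) ℂ := diagonal fun i => Complex.exp (-Θ (x i))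
  convert (hΘ m x).map_exp.mul_mul_conjTranspose_same D using 1
  ext i j
  simp only [D, diagonal_conjTranspose, diagonal_mul, mul_diagonal, of_apply, map_apply,
    Pi.star_apply, RCLike.star_def, ← Complex.exp_conj, ← Complex.exp_add, map_neg]
  congr 1
  ring

theorem of_tendsto {ι : Type*} {l : Filter ι} [l.NeBot]
    {Θs : ι → EuclideanSpace ℝ (Fin d) → ℂ} (hΘs : ∀ᶠ k in l, IsNegDefFn (Θs k))
    (hlim : ∀ x, Tendsto (fun k => Θs k x) l (𝓝 (Θ x))) : IsNegDefFn Θ := by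
  intro m x
  refine isClosed_setOf_posSemidef.mem_of_tendsto ?_ (hΘs.mono fun k hk => hk m x)
  refine tendsto_pi_nhds.2 fun i => tendsto_pi_nhds.2 fun j => ?_
  exact ((hlim _).add ((Complex.continuous_conj.tendsto _).comp (hlim _))).sub (hlim _)

end IsNegDefFn

theorem IsPosDefFn.isNegDefFn_sub {d : ℕ} {φ : EuclideanSpace ℝ (Fin d) → ℂ}
    (hφ : IsPosDefFn φ) : IsNegDefFn fun x => φ 0 - φ x := by
  intro m x
  let y : Fin (m + 1) → EuclideanSpace ℝ (Fin d) := Fin.cons 0 x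
  have hΦ := hφ (m + 1) y
  have hconj : ∀ j, (starRingEnd ℂ) (φ (x j)) = φ (-x j) := fun j => by
    simpa [y] using hΦ.isHermitian.apply 0 j.succ
  have hconj0 : (starRingEnd ℂ) (φ 0) = φ 0 := by
    simpa [y] using hΦ.isHermitian.apply 0 0
  let C : Matrix (Fin m) (Fin (m + 1)) ℂ := of fun i => Pi.single i.succ 1 - Pi.single 0 1
  convert hΦ.mul_mul_conjTranspose_same C using 1
  ext i j
  simp only [C, y, map_sub, hconj0, hconj, of_apply, mul_apply, Pi.sub_apply, Pi.single_apply,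
    sub_mul, ite_mul, one_mul, zero_mul, Finset.sum_sub_distrib, Finset.sum_ite_eq',
    Finset.mem_univ, ↓reduceIte, Fin.cons_succ, Fin.cons_zero, zero_sub, conjTranspose_apply,
    star_sub, RCLike.star_def, MonoidWithZeroHom.map_ite_one_zero, mul_sub, mul_ite, mul_one,
    mul_zero, sub_zero, neg_zero]
  ring

theorem tendsto_inv_mul_one_sub_exp_neg_mul (z : ℂ) :
    Tendsto (fun t : ℝ => (t : ℂ)⁻¹ * (1 - Complex.exp (-(t : ℂ) * z))) (𝓝[>] 0) (𝓝 z) := by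
  have hderiv : HasDerivAt (fun s : ℂ => 1 - Complex.exp (-s * z)) z ((0 : ℝ) : ℂ) := by
    simpa using ((hasDerivAt_id (0 : ℂ)).neg.mul_const z).cexp.const_sub 1
  convert hderiv.comp_ofReal.tendsto_slope_zero_right using 2 with t
  simp [Complex.real_smul]

/-- For `Θ : ℝ^d → ℂ` with `Θ 0 = 0`, `Θ` is negative definite (in the sense of Schoenberg)
if and only if for every `t > 0` the function `x ↦ t⁻¹ (1 - exp (-t Θ x))` is negative
definite. -/
theorem negDef_iff_one_sub_exp_negDef {d : ℕ} (Θ : EuclideanSpace ℝ (Fin d) → ℂ)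
    (hΘ0 : Θ 0 = 0) :
    IsNegDefFn Θ ↔
      ∀ t : ℝ, 0 < t →
        IsNegDefFn (fun x => (t : ℂ)⁻¹ * (1 - Complex.exp (-(t : ℂ) * Θ x))) := by
  refine ⟨fun hΘ t ht => ?_, fun h => ?_⟩
  · have hexp := ((hΘ.const_mul ht.le).isPosDefFn_exp_neg.isNegDefFn_sub).const_mul
      (inv_nonneg.2 ht.le)
    convert hexp using 2 with x
    simp [hΘ0]
  · exact IsNegDefFn.of_tendsto (l := 𝓝[>] 0) (eventually_mem_nhdsWithin.mono h)
      fun x => tendsto_inv_mul_one_sub_exp_neg_mul (Θ x)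
end

section
/- Let ρ be a symmetric Lévy measure on ℝ^d∖{0} with full support and Θ(u) = ∫(1 − cos⟨u,r⟩) ρ(dr) the associated real-valued continuous negative definite function. For all d-dimensional random variables U, V one has, in [0,∞], d_ρ²(law(U), law(V)) ≤ 4(E[Θ(U)] + E[Θ(V)]), where d_ρ(law(U), law(V)) = (∫ |f_U(r) − f_V(r)|² ρ(dr))^{1/2} and f_U, f_V denote the characteristic functions of U and V. -/
open MeasureTheory ProbabilityTheory
open scoped ENNReal RealInnerProductSpace

/-- `ρ` is a Lévy measure on `ℝ^d ∖ {0}`: it does not charge the origin and integrates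
`1 ∧ |r|²`. -/
def IsLevyMeasure {d : ℕ} (ρ : Measure (EuclideanSpace ℝ (Fin d))) : Prop :=
  ρ {0} = 0 ∧ ∫⁻ r, ENNReal.ofReal (min 1 (‖r‖ ^ 2)) ∂ρ < ∞

/-- `ρ` is symmetric: `ρ(B) = ρ(-B)` for all Borel sets `B`. -/
def IsSymmetricMeasure {d : ℕ} (ρ : Measure (EuclideanSpace ℝ (Fin d))) : Prop :=
  ρ.map (fun r => -r) = ρ

/-- `ρ` has full (topological) support on `ℝ^d ∖ {0}`. -/
def HasFullSupportOffZero {d : ℕ} (ρ : Measure (EuclideanSpace ℝ (Fin d))) : Prop :=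
  ∀ G : Set (EuclideanSpace ℝ (Fin d)), IsOpen G → G.Nonempty →
    (0 : EuclideanSpace ℝ (Fin d)) ∉ G → 0 < ρ G

/-- The real-valued continuous negative definite function
`Θ(u) = ∫ (1 - cos ⟪u, r⟫) ρ(dr)` associated to `ρ`, with values in `[0,∞]`. -/
noncomputable def levyCndf {d : ℕ} (ρ : Measure (EuclideanSpace ℝ (Fin d)))
    (u : EuclideanSpace ℝ (Fin d)) : ℝ≥0∞ :=
  ∫⁻ r, ENNReal.ofReal (1 - Real.cos ⟪u, r⟫) ∂ρ

/-- The characteristic function `f_U(r) = E[exp(i ⟪r, U⟫)]` of a random variable `U`. -/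
noncomputable def charFn {d : ℕ} {Ω : Type*} [MeasurableSpace Ω] (P : Measure Ω)
    (U : Ω → EuclideanSpace ℝ (Fin d)) (r : EuclideanSpace ℝ (Fin d)) : ℂ :=
  ∫ ω, Complex.exp (Complex.I * (⟪r, U ω⟫ : ℝ)) ∂P

/-! For `‖a‖, ‖b‖ ≤ 1` one has `‖a - b‖² ≤ 2 (‖1 - a‖² + ‖1 - b‖²) ≤ 4 ((1 - Re a) + (1 - Re b))`.
Take `a = f_U(r)`, `b = f_V(r)`: then `1 - Re f_U(r) = E[1 - cos ⟪U, r⟫]`, and integrating in `r`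
against `ρ` and exchanging the order of integration (Tonelli; `ρ` is σ-finite because the weight
`1 ∧ ‖r‖²` is integrable and positive `ρ`-a.e.) turns the right-hand side into
`4 (E[Θ(U)] + E[Θ(V)])`. -/

lemma Complex.sq_norm_one_sub_le {a : ℂ} (ha : ‖a‖ ≤ 1) : ‖1 - a‖ ^ 2 ≤ 2 * (1 - a.re) := by
  have hexpand : ‖1 - a‖ ^ 2 = 1 - 2 * a.re + ‖a‖ ^ 2 := by
    rw [Complex.sq_norm, Complex.sq_norm, Complex.normSq_apply, Complex.normSq_apply]
    simp only [Complex.sub_re, Complex.sub_im, Complex.one_re, Complex.one_im]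
    ring
  nlinarith [norm_nonneg a]

lemma Complex.sq_norm_sub_le {a b : ℂ} (ha : ‖a‖ ≤ 1) (hb : ‖b‖ ≤ 1) :
    ‖a - b‖ ^ 2 ≤ 4 * ((1 - a.re) + (1 - b.re)) := by
  have htri : ‖a - b‖ ≤ ‖1 - a‖ + ‖1 - b‖ := by
    simpa [norm_sub_rev] using norm_sub_le_norm_sub_add_norm_sub a 1 b
  nlinarith [norm_nonneg (a - b), sq_nonneg (‖1 - a‖ - ‖1 - b‖),
    Complex.sq_norm_one_sub_le ha, Complex.sq_norm_one_sub_le hb]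

namespace MeasureTheory

lemma sigmaFinite_of_lintegral_ne_top {α : Type*} [MeasurableSpace α]
    {μ : Measure α} {f : α → ℝ≥0∞} (hf : AEMeasurable f μ) (hf_ne_zero : ∀ᵐ x ∂μ, f x ≠ 0)
    (hf_int : ∫⁻ x, f x ∂μ ≠ ∞) : SigmaFinite μ := by
  have : IsFiniteMeasure (μ.withDensity f) := isFiniteMeasure_withDensity hf_int
  have hinv : ∀ᵐ x ∂μ.withDensity f, (f x)⁻¹ ≠ ∞ :=
    (ae_withDensity_iff' hf).2 (ae_of_all _ fun x hx => ENNReal.inv_ne_top.2 hx)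
  rw [← withDensity_inv_same₀ hf hf_ne_zero (ae_lt_top' hf hf_int).ne_of_lt]
  exact SigmaFinite.withDensity_of_ne_top hinv

variable {E : Type*} [NormedAddCommGroup E] [InnerProductSpace ℝ E] [MeasurableSpace E]
  [OpensMeasurableSpace E]

lemma integrable_cos_inner (μ : Measure E) [IsFiniteMeasure μ] (t : E) :
    Integrable (fun x => Real.cos ⟪x, t⟫) μ :=
  .of_bound (by fun_prop) 1 (ae_of_all _ fun x => Real.abs_cos_le_one _)

lemma re_charFun (μ : Measure E) [IsFiniteMeasure μ] (t : E) :
    (charFun μ t).re = ∫ x, Real.cos ⟪x, t⟫ ∂μ := by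
  have hint : Integrable (fun x => Complex.exp (⟪x, t⟫ * Complex.I)) μ :=
    .of_bound (by fun_prop) 1 (ae_of_all _ fun x => (Complex.norm_exp_ofReal_mul_I _).le)
  rw [charFun_apply, ← RCLike.re_to_complex, ← integral_re hint]
  simp [Complex.exp_ofReal_mul_I_re]

lemma lintegral_ofReal_one_sub_cos_inner (μ : Measure E) [IsProbabilityMeasure μ] (t : E) :
    ∫⁻ x, ENNReal.ofReal (1 - Real.cos ⟪x, t⟫) ∂μ = ENNReal.ofReal (1 - (charFun μ t).re) := by
  have hint : Integrable (fun x => 1 - Real.cos ⟪x, t⟫) μ :=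
    (integrable_const 1).sub (integrable_cos_inner μ t)
  rw [← ofReal_integral_eq_lintegral_ofReal hint
    (ae_of_all _ fun x => sub_nonneg.2 (Real.cos_le_one _)),
    integral_sub (integrable_const 1) (integrable_cos_inner μ t), re_charFun]
  simp

lemma sq_enorm_charFun_sub_le (μ ν : Measure E) [IsProbabilityMeasure μ] [IsProbabilityMeasure ν]
    (t : E) : ‖charFun μ t - charFun ν t‖ₑ ^ 2 ≤
      4 * (∫⁻ x, ENNReal.ofReal (1 - Real.cos ⟪x, t⟫) ∂μ
        + ∫⁻ x, ENNReal.ofReal (1 - Real.cos ⟪x, t⟫) ∂ν) := by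
  have hre (μ : Measure E) [IsProbabilityMeasure μ] : 0 ≤ 1 - (charFun μ t).re :=
    sub_nonneg.2 ((Complex.re_le_norm _).trans (norm_charFun_le_one t))
  rw [lintegral_ofReal_one_sub_cos_inner, lintegral_ofReal_one_sub_cos_inner,
    ← ENNReal.ofReal_add (hre μ) (hre ν), ← ENNReal.ofReal_ofNat 4,
    ← ENNReal.ofReal_mul (by norm_num), ← ofReal_norm, ← ENNReal.ofReal_pow (norm_nonneg _)]
  exact ENNReal.ofReal_le_ofReal
    (Complex.sq_norm_sub_le (norm_charFun_le_one t) (norm_charFun_le_one t))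

section SecondCountable

variable [SecondCountableTopology E]

lemma measurable_ofReal_one_sub_cos_inner :
    Measurable fun p : E × E => ENNReal.ofReal (1 - Real.cos ⟪p.1, p.2⟫) := by
  fun_prop

lemma lintegral_sq_enorm_charFun_sub_le (ρ μ ν : Measure E) [SFinite ρ]
    [IsProbabilityMeasure μ] [IsProbabilityMeasure ν] :
    ∫⁻ t, ‖charFun μ t - charFun ν t‖ₑ ^ 2 ∂ρ ≤
      4 * (∫⁻ x, ∫⁻ t, ENNReal.ofReal (1 - Real.cos ⟪x, t⟫) ∂ρ ∂μ
        + ∫⁻ x, ∫⁻ t, ENNReal.ofReal (1 - Real.cos ⟪x, t⟫) ∂ρ ∂ν) := by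
  have hswap (μ : Measure E) [IsProbabilityMeasure μ] :
      ∫⁻ t, ∫⁻ x, ENNReal.ofReal (1 - Real.cos ⟪x, t⟫) ∂μ ∂ρ
        = ∫⁻ x, ∫⁻ t, ENNReal.ofReal (1 - Real.cos ⟪x, t⟫) ∂ρ ∂μ :=
    lintegral_lintegral_swap
      (measurable_ofReal_one_sub_cos_inner.comp measurable_swap).aemeasurable
  have hmeas : Measurable fun t => ∫⁻ x, ENNReal.ofReal (1 - Real.cos ⟪x, t⟫) ∂μ :=
    measurable_ofReal_one_sub_cos_inner.lintegral_prod_left'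
  calc ∫⁻ t, ‖charFun μ t - charFun ν t‖ₑ ^ 2 ∂ρ
      ≤ ∫⁻ t, 4 * (∫⁻ x, ENNReal.ofReal (1 - Real.cos ⟪x, t⟫) ∂μ
          + ∫⁻ x, ENNReal.ofReal (1 - Real.cos ⟪x, t⟫) ∂ν) ∂ρ :=
        lintegral_mono (sq_enorm_charFun_sub_le μ ν)
    _ = _ := by
        rw [lintegral_const_mul' _ _ ENNReal.ofNat_ne_top, lintegral_add_left hmeas,
          hswap, hswap]

end SecondCountable

end MeasureTheory

section Levy

variable {d : ℕ}

lemma IsLevyMeasure.sigmaFinite {ρ : Measure (EuclideanSpace ℝ (Fin d))} (hρ : IsLevyMeasure ρ) :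
    SigmaFinite ρ := by
  refine sigmaFinite_of_lintegral_ne_top (by fun_prop) ?_ hρ.2.ne
  filter_upwards [compl_mem_ae_iff.2 hρ.1] with r hr
  exact (ENNReal.ofReal_pos.2 (lt_min one_pos (pow_pos (norm_pos_iff.2 hr) 2))).ne'

lemma measurable_levyCndf (ρ : Measure (EuclideanSpace ℝ (Fin d))) [SFinite ρ] :
    Measurable (levyCndf ρ) :=
  measurable_ofReal_one_sub_cos_inner.lintegral_prod_right'

lemma charFn_eq_charFun {Ω : Type*} [MeasurableSpace Ω] {P : Measure Ω}
    {U : Ω → EuclideanSpace ℝ (Fin d)} (hU : AEMeasurable U P) :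
    charFn P U = charFun (P.map U) := by
  ext r
  rw [charFun_apply, integral_map hU (by fun_prop), charFn]
  simp_rw [mul_comm Complex.I, real_inner_comm]

end Levy

theorem dRho_sq_le_four_mul_moments_general {d : ℕ}
    (ρ : Measure (EuclideanSpace ℝ (Fin d)))
    (hLevy : IsLevyMeasure ρ)
    {Ω : Type*} [MeasurableSpace Ω] (P : Measure Ω) [IsProbabilityMeasure P]
    (U V : Ω → EuclideanSpace ℝ (Fin d))
    (hU : Measurable U) (hV : Measurable V) :
    (∫⁻ r, (‖charFn P U r - charFn P V r‖₊ : ℝ≥0∞) ^ 2 ∂ρ)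
      ≤ 4 * ((∫⁻ ω, levyCndf ρ (U ω) ∂P) + ∫⁻ ω, levyCndf ρ (V ω) ∂P) := by
  have := hLevy.sigmaFinite
  have := Measure.isProbabilityMeasure_map (μ := P) hU.aemeasurable
  have := Measure.isProbabilityMeasure_map (μ := P) hV.aemeasurable
  rw [charFn_eq_charFun hU.aemeasurable, charFn_eq_charFun hV.aemeasurable,
    ← lintegral_map (measurable_levyCndf ρ) hU, ← lintegral_map (measurable_levyCndf ρ) hV]
  exact lintegral_sq_enorm_charFun_sub_le ρ _ _

/-- Let `ρ` be a symmetric Lévy measure with full support and `Θ` the associated cndf.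
For all `d`-dimensional random variables `U, V`, in `[0,∞]`,
`d_ρ²(law U, law V) = ∫ |f_U - f_V|² dρ ≤ 4 (E[Θ(U)] + E[Θ(V)])`. -/
theorem dRho_sq_le_four_mul_moments {d : ℕ}
    (ρ : Measure (EuclideanSpace ℝ (Fin d)))
    (hLevy : IsLevyMeasure ρ) (hsym : IsSymmetricMeasure ρ)
    (hfull : HasFullSupportOffZero ρ)
    {Ω : Type*} [MeasurableSpace Ω] (P : Measure Ω) [IsProbabilityMeasure P]
    (U V : Ω → EuclideanSpace ℝ (Fin d))
    (hU : Measurable U) (hV : Measurable V) :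
    (∫⁻ r, (‖charFn P U r - charFn P V r‖₊ : ℝ≥0∞) ^ 2 ∂ρ)
      ≤ 4 * ((∫⁻ ω, levyCndf ρ (U ω) ∂P) + ∫⁻ ω, levyCndf ρ (V ω) ∂P) :=
  dRho_sq_le_four_mul_moments_general ρ hLevy P U V hU hV
end
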